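/- Fix L_C > 0, k > 0, 0 < α < 1/2, K ≥ 0 and T ≥ 0. Let κ : Γ_ℂ × ℝ → ℂ satisfy |κ(x,t)| ≤ K e^{−k|Im x|}(1+|x|+|t|)^{−1/2} for all x ∈ Γ_ℂ and t ∈ ℝ. Let τ : ℝ → ℂ be measurable with |τ(t)| ≤ T(1+|t|)^{−(α+1/2)} for all t ∈ ℝ. Then there is a constant K′ > 0, depending only on k, α and K, such that for every x ∈ Γ_ℂ the integral ∫_ℝ κ(x,t) τ(t) dt is absolutely convergent and |∫_ℝ κ(x,t) τ(t) dt| ≤ K′ T e^{−k|Im x|}(1+|x|)^{−α}. -/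

import Mathlib

open MeasureTheory Set

noncomputable section

noncomputable section

/-- The region `Γ_L = {z : Re z < -L, Im z ≤ 0}`. -/
def GammaL (L : ℝ) : Set ℂ := {z | z.re < -L ∧ z.im ≤ 0}

/-- The region `Γ_M = {z : |Re z| ≤ L, Im z = 0}`. -/
def GammaM (L : ℝ) : Set ℂ := {z | |z.re| ≤ L ∧ z.im = 0}

/-- The region `Γ_R = {z : Re z > L, Im z ≥ 0}`. -/
def GammaR (L : ℝ) : Set ℂ := {z | L < z.re ∧ 0 ≤ z.im}

/-- The contour region `Γ_ℂ = Γ_L ∪ Γ_M ∪ Γ_R`. -/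
def GammaC (L : ℝ) : Set ℂ := GammaL L ∪ GammaM L ∪ GammaR L

/-- The weight `e^{β|Im x|} (1+|x|)^α`. -/
def cweight (α β : ℝ) (x : ℂ) : ℝ :=
  Real.exp (β * |x.im|) * (1 + ‖x‖) ^ α

/-- The norm `‖f‖_{α,β} = sup_{x ∈ Γ_ℂ} e^{β|Im x|}(1+|x|)^α |f x|`. -/
def cnorm (L α β : ℝ) (f : ℂ → ℂ) : ℝ :=
  sSup ((fun x => cweight α β x * ‖f x‖) '' GammaC L)

/-- Membership in the space `𝒞^{α,β}`: continuous on `Γ_ℂ`, analytic on the interiors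
of `Γ_L` and `Γ_R`, and with finite norm `‖f‖_{α,β}` (the weighted values are bounded). -/
def MemC (L α β : ℝ) (f : ℂ → ℂ) : Prop :=
  ContinuousOn f (GammaC L) ∧
  AnalyticOnNhd ℂ f (interior (GammaL L)) ∧
  AnalyticOnNhd ℂ f (interior (GammaR L)) ∧
  BddAbove ((fun x => cweight α β x * ‖f x‖) '' GammaC L)

/-!
Split `∫₀^∞ (B+s)^{-a}(1+s)^{-b} ds` at `s = B`. On `(0, B]` the first factor is at most
`B^{-a}` and the second at most `s^{-b}`, integrable at `0` because `b < 1`; on `(B, ∞)` the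
integrand is at most `s^{-(a+b)}`, integrable at `∞` because `a + b > 1`. Both pieces are
`O(B^{1-a-b})`. With `B = 1 + |x|`, `a = 1/2`, `b = α + 1/2` the kernel and density bounds
reduce the theorem to this estimate, with exponent `1 - a - b = -α`.
-/

section ShiftedDecay

variable {a b B : ℝ}

lemma integrable_add_abs_rpow_mul_one_add_abs_rpow (ha : 0 ≤ a) (hab : 1 < a + b) (hB : 1 ≤ B) :
    Integrable fun t : ℝ => (B + |t|) ^ (-a) * (1 + |t|) ^ (-b) := by
  have hpos : ∀ c t : ℝ, 1 ≤ c → 0 < c + |t| := fun c t hc => by positivity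
  have hcont : Continuous fun t : ℝ => (B + |t|) ^ (-a) * (1 + |t|) ^ (-b) :=
    ((continuous_const.add continuous_abs).rpow_const fun t => Or.inl (hpos B t hB).ne').mul
      ((continuous_const.add continuous_abs).rpow_const fun t => Or.inl (hpos 1 t le_rfl).ne')
  have hdom : Integrable fun t : ℝ => (1 + ‖t‖) ^ (-(a + b)) :=
    integrable_one_add_norm (by simpa using hab)
  refine hdom.mono' hcont.aestronglyMeasurable (.of_forall fun t => ?_)
  have h1 := hpos 1 t le_rfl
  rw [Real.norm_of_nonneg (by positivity), Real.norm_eq_abs, neg_add, Real.rpow_add h1]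
  exact mul_le_mul_of_nonneg_right
    (Real.rpow_le_rpow_of_nonpos h1 (by linarith) (by linarith)) (by positivity)

lemma setIntegral_Ioc_add_rpow_mul_one_add_rpow_le (ha : 0 ≤ a) (hb : 0 ≤ b) (hb1 : b < 1)
    (hB : 0 < B) :
    ∫ s in Ioc 0 B, (B + s) ^ (-a) * (1 + s) ^ (-b) ≤ B ^ (1 - (a + b)) / (1 - b) := by
  have hdom : IntegrableOn (fun s : ℝ => B ^ (-a) * s ^ (-b)) (Ioc 0 B) :=
    ((intervalIntegral.intervalIntegrable_rpow' (by linarith)).const_mul _).1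
  calc ∫ s in Ioc 0 B, (B + s) ^ (-a) * (1 + s) ^ (-b)
      ≤ ∫ s in Ioc 0 B, B ^ (-a) * s ^ (-b) := by
        refine integral_mono_of_nonneg ?_ hdom ?_ <;>
          refine (ae_restrict_iff' measurableSet_Ioc).2 (.of_forall fun s ⟨hs, _⟩ => ?_)
        · positivity
        · exact mul_le_mul (Real.rpow_le_rpow_of_nonpos hB (by linarith) (by linarith))
            (Real.rpow_le_rpow_of_nonpos hs (by linarith) (by linarith))
            (by positivity) (by positivity)
    _ = B ^ (-a) * (B ^ (-b + 1) / (-b + 1)) := by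
        rw [integral_const_mul, ← intervalIntegral.integral_of_le hB.le,
          integral_rpow (Or.inl (by linarith)), Real.zero_rpow (by linarith), sub_zero]
    _ = B ^ (1 - (a + b)) / (1 - b) := by
        rw [← mul_div_assoc, ← Real.rpow_add hB]
        ring_nf

lemma setIntegral_Ioi_add_rpow_mul_one_add_rpow_le (ha : 0 ≤ a) (hb : 0 ≤ b)
    (hab : 1 < a + b) (hB : 0 < B) :
    ∫ s in Ioi B, (B + s) ^ (-a) * (1 + s) ^ (-b) ≤ B ^ (1 - (a + b)) / (a + b - 1) := by
  calc ∫ s in Ioi B, (B + s) ^ (-a) * (1 + s) ^ (-b)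
      ≤ ∫ s in Ioi B, s ^ (-(a + b)) := by
        refine integral_mono_of_nonneg ?_ (integrableOn_Ioi_rpow_of_lt (by linarith) hB) ?_ <;>
          refine (ae_restrict_iff' measurableSet_Ioi).2 (.of_forall fun s hs => ?_)
        · have : 0 < s := hB.trans hs
          positivity
        · have hs0 : 0 < s := hB.trans hs
          show _ ≤ s ^ (-(a + b))
          rw [neg_add, Real.rpow_add hs0]
          exact mul_le_mul (Real.rpow_le_rpow_of_nonpos hs0 (by linarith) (by linarith))
            (Real.rpow_le_rpow_of_nonpos hs0 (by linarith) (by linarith))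
            (by positivity) (by positivity)
    _ = B ^ (1 - (a + b)) / (a + b - 1) := by
        rw [integral_Ioi_rpow_of_lt (by linarith) hB, neg_div, ← div_neg]
        ring_nf

lemma integral_add_abs_rpow_mul_one_add_abs_rpow_le (ha : 0 ≤ a) (hb : 0 ≤ b) (hb1 : b < 1)
    (hab : 1 < a + b) (hB : 1 ≤ B) :
    ∫ t : ℝ, (B + |t|) ^ (-a) * (1 + |t|) ^ (-b) ≤
      2 * (1 / (1 - b) + 1 / (a + b - 1)) * B ^ (1 - (a + b)) := by
  have hB0 : 0 < B := by linarith
  have hint : IntegrableOn (fun s : ℝ => (B + s) ^ (-a) * (1 + s) ^ (-b)) (Ioi 0) :=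
    (integrable_add_abs_rpow_mul_one_add_abs_rpow ha hab hB).integrableOn.congr_fun
      (fun s hs => by simp only [abs_of_pos (mem_Ioi.1 hs)]) measurableSet_Ioi
  rw [integral_comp_abs (f := fun s => (B + s) ^ (-a) * (1 + s) ^ (-b)),
    ← Ioc_union_Ioi_eq_Ioi hB0.le, setIntegral_union (Ioc_disjoint_Ioi le_rfl) measurableSet_Ioi
      (hint.mono_set Ioc_subset_Ioi_self) (hint.mono_set (Ioi_subset_Ioi hB0.le))]
  have hIoc := setIntegral_Ioc_add_rpow_mul_one_add_rpow_le ha hb hb1 hB0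
  have hIoi := setIntegral_Ioi_add_rpow_mul_one_add_rpow_le ha hb hab hB0
  calc _ ≤ 2 * (B ^ (1 - (a + b)) / (1 - b) + B ^ (1 - (a + b)) / (a + b - 1)) := by linarith
    _ = _ := by ring

lemma integrable_mul_and_norm_integral_mul_le {f g : ℝ → ℂ} {c d : ℝ} (hf : Measurable f)
    (hg : Measurable g) (ha : 0 ≤ a) (hb : 0 ≤ b) (hb1 : b < 1) (hab : 1 < a + b) (hB : 1 ≤ B)
    (hfc : ∀ t, ‖f t‖ ≤ c * (B + |t|) ^ (-a)) (hgd : ∀ t, ‖g t‖ ≤ d * (1 + |t|) ^ (-b)) :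
    Integrable (fun t => f t * g t) ∧ ‖∫ t, f t * g t‖ ≤
      c * d * (2 * (1 / (1 - b) + 1 / (a + b - 1)) * B ^ (1 - (a + b))) := by
  have hc : 0 ≤ c := nonneg_of_mul_nonneg_left ((norm_nonneg _).trans (hfc 0)) (by positivity)
  have hd : 0 ≤ d := nonneg_of_mul_nonneg_left ((norm_nonneg _).trans (hgd 0)) (by positivity)
  have hbound : ∀ t, ‖f t * g t‖ ≤ c * d * ((B + |t|) ^ (-a) * (1 + |t|) ^ (-b)) := fun t => by
    rw [norm_mul, mul_mul_mul_comm]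
    exact mul_le_mul (hfc t) (hgd t) (norm_nonneg _) (by positivity)
  have hmaj := (integrable_add_abs_rpow_mul_one_add_abs_rpow ha hab hB).const_mul (c * d)
  refine ⟨hmaj.mono' (hf.mul hg).aestronglyMeasurable (.of_forall hbound), ?_⟩
  calc ‖∫ t, f t * g t‖ ≤ ∫ t, c * d * ((B + |t|) ^ (-a) * (1 + |t|) ^ (-b)) :=
        norm_integral_le_of_norm_le hmaj (.of_forall hbound)
    _ ≤ _ := by
        rw [integral_const_mul]
        gcongr
        exact integral_add_abs_rpow_mul_one_add_abs_rpow_le ha hb hb1 hab hB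

end ShiftedDecay

theorem statement_6 (k α K : ℝ) (hα0 : 0 < α) (hα : α < 1/2) (hK : 0 ≤ K) :
    ∃ K' > 0, ∀ L : ℝ, 0 < L → ∀ (κ : ℂ → ℝ → ℂ) (τ : ℝ → ℂ) (T : ℝ),
      (∀ x : ℂ, Measurable (κ x)) →
      (∀ x ∈ GammaC L, ∀ t : ℝ,
        ‖κ x t‖ ≤
          K * Real.exp (-k * |x.im|) * (1 + ‖x‖ + |t|) ^ (-(1/2 : ℝ))) →
      Measurable τ →
      (∀ t : ℝ, ‖τ t‖ ≤ T * (1 + |t|) ^ (-(α + 1/2))) →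
      ∀ x ∈ GammaC L,
        Integrable (fun t => κ x t * τ t) volume ∧
        ‖∫ t, κ x t * τ t‖ ≤
          K' * T * Real.exp (-k * |x.im|) * (1 + ‖x‖) ^ (-α) := by
  set C : ℝ := 2 * (1 / (1 - (α + 1/2)) + 1 / (1/2 + (α + 1/2) - 1))
  have hC : 0 < C := by
    have : 0 < 1 - (α + 1/2) := by linarith
    have : 0 < 1/2 + (α + 1/2) - 1 := by linarith
    positivity
  refine ⟨K * C + 1, by positivity, fun L _ κ τ T hκm hκb hτm hτb x hx => ?_⟩
  have hT : 0 ≤ T := by simpa using (norm_nonneg (τ 0)).trans (hτb 0)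
  obtain ⟨hint, hle⟩ := integrable_mul_and_norm_integral_mul_le (hκm x) hτm (by norm_num)
    (by linarith) (by linarith) (by linarith) (le_add_of_nonneg_right (norm_nonneg x))
    (hκb x hx) hτb
  rw [show 1 - (1/2 + (α + 1/2)) = -α by ring] at hle
  refine ⟨hint, hle.trans ?_⟩
  calc K * Real.exp (-k * |x.im|) * T * (C * (1 + ‖x‖) ^ (-α))
      = K * C * (T * Real.exp (-k * |x.im|) * (1 + ‖x‖) ^ (-α)) := by ring
    _ ≤ (K * C + 1) * (T * Real.exp (-k * |x.im|) * (1 + ‖x‖) ^ (-α)) := by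
        gcongr
        linarith
    _ = _ := by ring
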